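/- arXiv:1812.09378 — 5 statements merged into one kernel-verified Lean document; each statement's English description precedes it below -/
import Mathlib

section
/- For p > 2 prime, the polynomial X² + Y² over an algebraically closed field K of characteristic p is F_p-flat over K if and only if −1 is a square in F_p, equivalently p ≡ 1 (mod 4). -/
open MvPolynomial

/-- `P` is `𝔽_p`-flat over `K`: every zero of `P` in any field extension of `K`
admits a nontrivial `𝔽_p`-linear combination falling in (the image of) `K`. -/
def IsFpFlat (p : ℕ) {n : ℕ} {K : Type} [Field K] (P : MvPolynomial (Fin n) K) : Prop :=
  ∀ (L : Type) [Field L] (f : K →+* L) (u : Fin n → L),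
    MvPolynomial.eval u (MvPolynomial.map f P) = 0 →
      ∃ lam : Fin n → ZMod p, lam ≠ 0 ∧ (∑ i, ((lam i).val : L) * u i) ∈ Set.range f

/-! If `r² = -1` in `𝔽_p`, then `X² + Y² = (X - rY)(X + rY)`, so every zero satisfies
`u ± r v = 0 ∈ K`. Conversely, if `i² = -1` in `K`, the point `(t, i t)` over `K(t)` is a zero;
a combination `(λ + μ i) t` lies in `K` only if `λ + μ i = 0`, which puts `i` in `𝔽_p`. -/

theorem sub_mul_eq_zero_or_add_mul_eq_zero_of_sq_add_sq_eq_zero {R : Type*} [CommRing R]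
    [NoZeroDivisors R] {r x y : R} (hr : r * r = -1) (h : x ^ 2 + y ^ 2 = 0) :
    x - r * y = 0 ∨ x + r * y = 0 :=
  mul_eq_zero.1 (by linear_combination h - y ^ 2 * hr)

theorem RatFunc.X_notMem_range_algebraMap (K : Type*) [Field K] :
    (X : RatFunc K) ∉ Set.range (algebraMap K (RatFunc K)) := by
  rintro ⟨c, hc⟩
  have hdeg := congrArg intDegree hc
  rw [algebraMap_eq_C, intDegree_C, intDegree_X] at hdeg
  exact zero_ne_one hdeg

theorem RatFunc.eq_zero_of_algebraMap_mul_X_mem_range {K : Type*} [Field K] {a : K}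
    (h : algebraMap K (RatFunc K) a * X ∈ Set.range (algebraMap K (RatFunc K))) : a = 0 := by
  by_contra ha
  obtain ⟨c, hc⟩ := h
  refine X_notMem_range_algebraMap K ⟨c / a, ?_⟩
  rw [map_div₀, hc, mul_div_cancel_left₀ _ (by simpa using ha)]

section CharP

variable {p : ℕ} {K : Type*} [Field K] [CharP K p]

theorem sum_natCast_val_mul_eq_sum_map_castHom [NeZero p] {L : Type*} [Semiring L] {n : ℕ} (f : K →+* L)
    (lam : Fin n → ZMod p) (u : Fin n → L) :
    ∑ i, ((lam i).val : L) * u i = ∑ i, f (ZMod.castHom dvd_rfl K (lam i)) * u i := by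
  simp only [← map_natCast f, ZMod.natCast_val, ZMod.castHom_apply]

theorem isSquare_neg_one_of_sq_eq_neg_one_of_mem_range_castHom [Fact p.Prime] {i : K} (hi : i ^ 2 = -1)
    (h : i ∈ Set.range (ZMod.castHom (dvd_refl p) K)) : IsSquare (-1 : ZMod p) := by
  obtain ⟨s, rfl⟩ := h
  exact ⟨s, (ZMod.castHom (dvd_refl p) K).injective (by simpa [sq] using hi.symm)⟩

end CharP

theorem eval_map_X_sq_add_X_sq {K L : Type*} [CommSemiring K] [CommSemiring L] (f : K →+* L) (u : Fin 2 → L) :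
    eval u (map f (X 0 ^ 2 + X 1 ^ 2 : MvPolynomial (Fin 2) K)) = u 0 ^ 2 + u 1 ^ 2 := by
  simp

theorem isFpFlat_X_sq_add_X_sq_of_isSquare_neg_one {p : ℕ} [Fact p.Prime] {K : Type} [Field K]
    [CharP K p] (h : IsSquare (-1 : ZMod p)) :
    IsFpFlat p (X 0 ^ 2 + X 1 ^ 2 : MvPolynomial (Fin 2) K) := by
  obtain ⟨r, hr⟩ := h
  intro L _ f u hu
  set φ := ZMod.castHom (dvd_refl p) K
  have hr' : f (φ r) * f (φ r) = -1 := by rw [← map_mul, ← map_mul, ← hr]; simp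
  rw [eval_map_X_sq_add_X_sq] at hu
  obtain ⟨s, hs⟩ : ∃ s : ZMod p, u 0 + f (φ s) * u 1 = 0 :=
    (sub_mul_eq_zero_or_add_mul_eq_zero_of_sq_add_sq_eq_zero hr' hu).elim
      (fun hsub => ⟨-r, by simpa [sub_eq_add_neg] using hsub⟩) (fun hadd => ⟨r, hadd⟩)
  refine ⟨![1, s], fun h0 => one_ne_zero (congrFun h0 0), 0, ?_⟩
  rw [sum_natCast_val_mul_eq_sum_map_castHom f, Fin.sum_univ_two]
  simp only [Matrix.cons_val_zero, Matrix.cons_val_one, map_zero, map_one, one_mul]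
  exact hs.symm

theorem isSquare_neg_one_of_isFpFlat_X_sq_add_X_sq {p : ℕ} [Fact p.Prime] {K : Type} [Field K]
    [IsAlgClosed K] [CharP K p] (h : IsFpFlat p (X 0 ^ 2 + X 1 ^ 2 : MvPolynomial (Fin 2) K)) :
    IsSquare (-1 : ZMod p) := by
  obtain ⟨i, hi⟩ := IsAlgClosed.exists_pow_nat_eq (-1 : K) two_pos
  set ι := algebraMap K (RatFunc K)
  obtain ⟨lam, hlam, hmem⟩ := h (RatFunc K) ι ![RatFunc.X, ι i * RatFunc.X] (by
    have hιi : ι i ^ 2 = -1 := by rw [← map_pow, hi, map_neg, map_one]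
    simp only [eval_map_X_sq_add_X_sq, Matrix.cons_val_zero, Matrix.cons_val_one]
    linear_combination RatFunc.X ^ 2 * hιi)
  set φ := ZMod.castHom (dvd_refl p) K
  have hcomb : φ (lam 0) + φ (lam 1) * i = 0 := by
    refine RatFunc.eq_zero_of_algebraMap_mul_X_mem_range ?_
    rw [sum_natCast_val_mul_eq_sum_map_castHom ι, Fin.sum_univ_two] at hmem
    convert hmem using 1
    simp only [map_add, map_mul, Matrix.cons_val_zero, Matrix.cons_val_one]
    ring
  have hlam1 : lam 1 ≠ 0 := by
    intro h1
    refine hlam (funext fun j => ?_)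
    fin_cases j
    · simpa [h1] using hcomb
    · exact h1
  refine isSquare_neg_one_of_sq_eq_neg_one_of_mem_range_castHom hi ⟨-lam 0 / lam 1, ?_⟩
  rw [map_div₀, map_neg, div_eq_iff ((map_ne_zero φ).2 hlam1)]
  linear_combination -hcomb

/-- For an odd prime `p` and `K` algebraically closed of characteristic `p`, the
polynomial `X² + Y²` is `𝔽_p`-flat over `K` iff `−1` is a square in `𝔽_p`, iff
`p ≡ 1 (mod 4)`. -/
theorem stmt_4 (p : ℕ) [Fact p.Prime] (hp2 : 2 < p)
    {K : Type} [Field K] [IsAlgClosed K] [CharP K p] :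
    (IsFpFlat p ((X 0) ^ 2 + (X 1) ^ 2 : MvPolynomial (Fin 2) K) ↔
        IsSquare (-1 : ZMod p)) ∧
      (IsFpFlat p ((X 0) ^ 2 + (X 1) ^ 2 : MvPolynomial (Fin 2) K) ↔ p % 4 = 1) := by
  have hflat := Iff.intro (isSquare_neg_one_of_isFpFlat_X_sq_add_X_sq (K := K))
    isFpFlat_X_sq_add_X_sq_of_isSquare_neg_one
  have hodd : p % 2 = 1 := Nat.odd_iff.1 ((Fact.out : p.Prime).odd_of_ne_two hp2.ne')
  refine ⟨hflat, hflat.trans (ZMod.exists_sq_eq_neg_one_iff.trans ?_)⟩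
  omega
end

section
/- Let ⫝ be a ternary relation on subsets of a structure satisfying Monotonicity (A ⫝_C BD implies A ⫝_C B) and Transitivity (A ⫝_{CB} D and B ⫝_C D imply AB ⫝_C D). Then the monotonised relation ⫝ᵐ, defined by A ⫝ᵐ_C B iff A ⫝_{CD} B for all D ⊆ acl(BC), also satisfies Monotonicity and Transitivity. -/
/-- If a ternary relation `I` satisfies Monotonicity and Transitivity, then so does its
monotonised relation `Im`, where `Im A C B ⇔ ∀ D ⊆ cl(B ∪ C), I A (C ∪ D) B` for a
monotone closure operator `cl`. -/
theorem stmt_6 {M : Type*} (cl : Set M → Set M)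
    (hext : ∀ X : Set M, X ⊆ cl X) (hmono : ∀ X Y : Set M, X ⊆ Y → cl X ⊆ cl Y)
    (I : Set M → Set M → Set M → Prop)
    (hMon : ∀ A C B D : Set M, I A C (B ∪ D) → I A C B)
    (hTra : ∀ A B C D : Set M, I A (C ∪ B) D → I B C D → I (A ∪ B) C D)
    (Im : Set M → Set M → Set M → Prop)
    (hIm : ∀ A C B : Set M, Im A C B ↔ ∀ D ⊆ cl (B ∪ C), I A (C ∪ D) B) :
    (∀ A C B D : Set M, Im A C (B ∪ D) → Im A C B) ∧
      (∀ A B C D : Set M, Im A (C ∪ B) D → Im B C D → Im (A ∪ B) C D) := by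
  constructor
  · intro A C B D h
    rw [hIm] at h ⊢
    intro E hE
    exact hMon A (C ∪ E) B D (h E (hE.trans (hmono _ _ (by
      intro x hx
      rcases hx with hx | hx
      · exact Or.inl (Or.inl hx)
      · exact Or.inr hx))))
  · intro A B C D h1 h2
    rw [hIm] at h1 h2 ⊢
    intro E hE
    refine hTra A B (C ∪ E) D ?_ (h2 E hE)
    have hsub : E ∪ B ⊆ cl (D ∪ (C ∪ B)) := by
      intro x hx
      rcases hx with hx | hx
      · exact hmono _ _ (by intro y hy; rcases hy with hy | hy; exacts [Or.inl hy, Or.inr (Or.inl hy)]) (hE hx)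
      · exact hext _ (Or.inr (Or.inr hx))
    have := h1 (E ∪ B) hsub
    have heq : (C ∪ B) ∪ (E ∪ B) = (C ∪ E) ∪ B := by
      ext x; simp [Set.mem_union]; tauto
    rwa [heq] at this
end

section
/- In a pregeometry (S, cl), define A ⫝ᵃ_C B iff cl(A∪C) ∩ cl(B∪C) = cl(C), and define the independence relation of the pregeometry A ⫝_C B iff every finite subset of A that is cl-independent over C remains cl-independent over B∪C. Then ⫝ is obtained from ⫝ᵃ by forcing base monotonicity: A ⫝_C B if and only if for every D ⊆ cl(B∪C), cl(A∪C∪D) ∩ cl(B∪C) = cl(C∪D). -/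
private lemma stmt7_min {S : Type*} {p : Finset S → Prop} (h : ∃ F, p F) :
    ∃ F, p F ∧ ∀ F', p F' → F.card ≤ F'.card := by
  classical
  have hq : ∃ n, ∃ F, p F ∧ F.card = n := by
    obtain ⟨F, hF⟩ := h; exact ⟨F.card, F, hF, rfl⟩
  obtain ⟨F, hF, hc⟩ := Nat.find_spec hq
  exact ⟨F, hF, fun F' hF' => hc ▸ Nat.find_min' hq ⟨F', hF', rfl⟩⟩

/-- In a pregeometry `(S, cl)`, the independence relation of the pregeometry
(`A ⫝_C B` iff every finite subset of `A` that is `cl`-independent over `C` stays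
independent over `B ∪ C`) is obtained from `⫝ᵃ` (where `A ⫝ᵃ_C B ⇔
cl(A∪C) ∩ cl(B∪C) = cl(C)`) by forcing base monotonicity:
`A ⫝_C B ⇔ ∀ D ⊆ cl(B∪C), cl(A∪C∪D) ∩ cl(B∪C) = cl(C∪D)`. -/
theorem stmt_7 {S : Type*} (cl : Set S → Set S)
    (hext : ∀ X : Set S, X ⊆ cl X)
    (hmono : ∀ X Y : Set S, X ⊆ Y → cl X ⊆ cl Y)
    (hidem : ∀ X : Set S, cl (cl X) = cl X)
    (hfin : ∀ (X : Set S) (a : S), a ∈ cl X → ∃ F : Finset S, ↑F ⊆ X ∧ a ∈ cl ↑F)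
    (hexch : ∀ (X : Set S) (a b : S), a ∈ cl (X ∪ {b}) → a ∉ cl X → b ∈ cl (X ∪ {a}))
    (indep : Set S → Set S → Prop)
    (hindep : ∀ X C : Set S, indep X C ↔ ∀ x ∈ X, x ∉ cl ((X \ {x}) ∪ C))
    (A B C : Set S) :
    (∀ F : Finset S, ↑F ⊆ A → indep ↑F C → indep ↑F (B ∪ C)) ↔
      ∀ D ⊆ cl (B ∪ C), cl (A ∪ C ∪ D) ∩ cl (B ∪ C) = cl (C ∪ D) := by
  classical
  have hsub : ∀ X Y : Set S, X ⊆ cl Y → cl X ⊆ cl Y := fun X Y h =>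
    (hidem Y) ▸ hmono X (cl Y) h
  constructor
  · -- forcing base monotonicity holds
    intro hL D hD
    apply Set.Subset.antisymm
    · rintro b ⟨hb1, hb2⟩
      -- choose a card-minimal finset F ⊆ A with b ∈ cl(F ∪ C ∪ D)
      have hex : ∃ F : Finset S, ↑F ⊆ A ∧ b ∈ cl (↑F ∪ C ∪ D) := by
        obtain ⟨G, hG, hbG⟩ := hfin _ _ hb1
        refine ⟨G.filter (· ∈ A), ?_, ?_⟩
        · intro y hy
          simpa using (Finset.mem_filter.mp (by exact_mod_cast hy)).2
        · refine hmono _ _ ?_ hbG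
          intro y hy
          rcases hG hy with (hy' | hy') | hy'
          · exact Or.inl (Or.inl (by simpa using Finset.mem_filter.mpr ⟨by exact_mod_cast hy, hy'⟩))
          · exact Or.inl (Or.inr hy')
          · exact Or.inr hy'
      obtain ⟨F, ⟨hFA, hFb⟩, hminF⟩ :=
        stmt7_min (p := fun F : Finset S => ↑F ⊆ A ∧ b ∈ cl (↑F ∪ C ∪ D)) hex
      -- F must be empty
      have hFempty : F = ∅ := by
        by_contra hne
        obtain ⟨x, hxF⟩ := Finset.nonempty_iff_ne_empty.mpr hne
        -- notation for the erased set
        set X : Set S := ↑(F.erase x) ∪ C ∪ D with hX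
        have hsplit : (↑F : Set S) ∪ C ∪ D = X ∪ {x} := by
          rw [hX]
          have : (↑F : Set S) = ↑(F.erase x) ∪ {x} := by
            simp [Finset.coe_erase, Set.diff_union_self,
              Set.union_eq_self_of_subset_right, Set.singleton_subset_iff, hxF]
          rw [this]
          ext y; simp; tauto
        have hbnX : b ∉ cl X := by
          intro hbX
          have hle := hminF (F.erase x)
            ⟨(Finset.coe_erase x F ▸ Set.diff_subset).trans hFA, hbX⟩
          have := Finset.card_erase_lt_of_mem hxF
          omega
        have hxcl : x ∈ cl (X ∪ {b}) := hexch X b x (hsplit ▸ hFb) hbnX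
        -- F is independent over C
        have hFindC : indep ↑F C := by
          rw [hindep]
          intro y hy hycl
          have hyF : y ∈ F := by exact_mod_cast hy
          have hFsub : (↑F : Set S) ∪ C ∪ D ⊆ cl ((↑F \ {y}) ∪ C ∪ D) := by
            rintro z ((hz | hz) | hz)
            · by_cases hzy : z = y
              · subst hzy
                exact hmono _ _ Set.subset_union_left hycl
              · exact hext _ (Or.inl (Or.inl ⟨hz, hzy⟩))
            · exact hext _ (Or.inl (Or.inr hz))
            · exact hext _ (Or.inr hz)
          have hb' : b ∈ cl ((↑(F.erase y) : Set S) ∪ C ∪ D) := by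
            rw [Finset.coe_erase]
            exact hsub _ _ hFsub hFb
          have hle := hminF (F.erase y)
            ⟨(Finset.coe_erase y F ▸ Set.diff_subset).trans hFA, hb'⟩
          have := Finset.card_erase_lt_of_mem hyF
          omega
        have hFindBC : indep ↑F (B ∪ C) := hL F hFA hFindC
        -- but x ∈ cl((F \ {x}) ∪ (B ∪ C)), contradiction
        have hxBC : x ∈ cl ((↑F \ {x}) ∪ (B ∪ C)) := by
          refine hsub _ _ ?_ hxcl
          rintro z (((hz | hz) | hz) | hz)
          · exact hext _ (Or.inl (by rw [← Finset.coe_erase]; exact hz))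
          · exact hext _ (Or.inr (Or.inr hz))
          · exact hmono _ _ Set.subset_union_right (hD hz)
          · simp only [Set.mem_singleton_iff] at hz
            subst hz
            exact hmono _ _ Set.subset_union_right hb2
        exact (hindep ↑F (B ∪ C)).mp hFindBC x (by exact_mod_cast hxF) hxBC
      subst hFempty
      simpa using hFb
    · intro b hb
      refine ⟨hmono _ _ ?_ hb, hsub _ _ ?_ hb⟩
      · rintro z (hz | hz)
        · exact Or.inl (Or.inr hz)
        · exact Or.inr hz
      · rintro z (hz | hz)
        · exact hext _ (Or.inr hz)
        · exact hD hz
  · -- converse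
    intro hR F hFA hFC
    rw [hindep]
    intro x hx hxB
    have hxF : x ∈ F := by exact_mod_cast hx
    have hxC : x ∉ cl ((↑F \ {x}) ∪ C) := (hindep ↑F C).mp hFC x hx
    -- choose a card-minimal finset D ⊆ cl(B∪C) with x ∈ cl((F\{x}) ∪ C ∪ D)
    have hex : ∃ D : Finset S, ↑D ⊆ cl (B ∪ C) ∧ x ∈ cl ((↑F \ {x}) ∪ C ∪ ↑D) := by
      obtain ⟨G, hG, hxG⟩ := hfin _ _ hxB
      refine ⟨G.filter (· ∈ B ∪ C), ?_, ?_⟩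
      · intro y hy
        exact hext _ ((Finset.mem_filter.mp (by exact_mod_cast hy)).2)
      · refine hmono _ _ ?_ hxG
        intro y hy
        rcases hG hy with hy' | hy'
        · exact Or.inl (Or.inl hy')
        · exact Or.inr (by simpa using Finset.mem_filter.mpr ⟨by exact_mod_cast hy, hy'⟩)
    obtain ⟨D, ⟨hDBC, hxD⟩, hminD⟩ :=
      stmt7_min (p := fun D : Finset S => ↑D ⊆ cl (B ∪ C) ∧ x ∈ cl ((↑F \ {x}) ∪ C ∪ ↑D)) hex
    rcases eq_or_ne D ∅ with hDe | hDne
    · subst hDe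
      exact hxC (by simpa using hxD)
    · obtain ⟨d, hdD⟩ := Finset.nonempty_iff_ne_empty.mpr hDne
      set X : Set S := (↑F \ {x}) ∪ C ∪ ↑(D.erase d) with hXdef
      have hD'BC : (↑(D.erase d) : Set S) ⊆ cl (B ∪ C) :=
        (Finset.coe_erase d D ▸ Set.diff_subset).trans hDBC
      have hxnX : x ∉ cl X := by
        intro hxX
        have hle := hminD (D.erase d) ⟨hD'BC, hxX⟩
        have := Finset.card_erase_lt_of_mem hdD
        omega
      have hsplit : (↑F \ {x} : Set S) ∪ C ∪ ↑D = X ∪ {d} := by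
        rw [hXdef]
        have : (↑D : Set S) = ↑(D.erase d) ∪ {d} := by
          simp [Finset.coe_erase, Set.diff_union_self,
            Set.union_eq_self_of_subset_right, Set.singleton_subset_iff, hdD]
        rw [this]
        ext y; simp; tauto
      have hdcl : d ∈ cl (X ∪ {x}) := hexch X x d (hsplit ▸ hxD) hxnX
      have hdA : d ∈ cl (A ∪ C ∪ ↑(D.erase d)) := by
        refine hmono _ _ ?_ hdcl
        rintro z (((hz | hz) | hz) | hz)
        · exact Or.inl (Or.inl (hFA hz.1))
        · exact Or.inl (Or.inr hz)
        · exact Or.inr hz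
        · simp only [Set.mem_singleton_iff] at hz
          subst hz
          exact Or.inl (Or.inl (hFA hx))
      have hdBC : d ∈ cl (B ∪ C) := hDBC (by exact_mod_cast hdD)
      have hdCD : d ∈ cl (C ∪ ↑(D.erase d)) := by
        rw [← hR ↑(D.erase d) hD'BC]; exact ⟨hdA, hdBC⟩
      -- then x ∈ cl X, contradiction
      refine hxnX (hsub _ _ ?_ (hsplit ▸ hxD))
      rintro z (hz | hz)
      · exact hext _ hz
      · simp only [Set.mem_singleton_iff] at hz
        subst hz
        refine hmono _ _ ?_ hdCD
        rintro z (hz | hz)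
        · exact Or.inl (Or.inr hz)
        · exact Or.inr hz
end

section
/- Let ⫝ be a ternary relation on subsets of a monster model satisfying Invariance and Monotonicity. Define A ⫝*_C B iff for every B̂ ⊇ B there exists A' ≡_{BC} A with A' ⫝_C B̂. If ⫝ additionally satisfies Base Monotonicity, then ⫝* satisfies Base Monotonicity. -/
/-- Let `I` be a ternary relation (written `A ⫝_C B` as `I A C B`) on subsets of a
monster model, invariant for the type-equivalence relation `eqv`, and satisfying
Monotonicity.  Let `star` be the relation `⫝*` defined by
`A ⫝*_C B ⇔ ∀ B̂ ⊇ B, ∃ A' ≡_{B∪C} A with A' ⫝_C B̂`.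
If `I` moreover satisfies Base Monotonicity, then so does `star`. -/
theorem stmt_14 {M : Type*} (I : Set M → Set M → Set M → Prop)
    (eqv : Set M → Set M → Set M → Prop)
    (hInv : ∀ A A' C B : Set M, eqv C A A' → (I A C B ↔ I A' C B))
    (hMon : ∀ A C B D : Set M, I A C (B ∪ D) → I A C B)
    (hBMon : ∀ A C B D : Set M, I A C (B ∪ D) → I A (C ∪ D) B)
    (star : Set M → Set M → Set M → Prop)
    (hstar : ∀ A C B : Set M,
      star A C B ↔ ∀ Bh : Set M, B ⊆ Bh → ∃ A', eqv (B ∪ C) A A' ∧ I A' C Bh) :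
    ∀ A C B D : Set M, star A C (B ∪ D) → star A (C ∪ D) B := by
  intro A C B D h
  rw [hstar] at h ⊢
  intro Bh hBh
  obtain ⟨A', hA'eqv, hA'I⟩ := h (Bh ∪ D) (Set.union_subset_union hBh (subset_refl D))
  refine ⟨A', ?_, ?_⟩
  · have : B ∪ D ∪ C = B ∪ (C ∪ D) := by
      rw [Set.union_assoc, Set.union_comm D C]
    rwa [this] at hA'eqv
  · exact hBMon A' C Bh D hA'I
end

section
/- Let V be an F_p-vector space, G a subspace, π : V → V/G the quotient. Let a, b, C satisfy: A = span(C ∪ a), B = span(C ∪ b), A ∩ B = span(C), and π(A) ∩ π(B) = π(span(C)). Then G ∩ (A + B) = (G ∩ A) + (G ∩ B). Conversely, if A ∩ B = span(C) and G ∩ (A + B) = (G ∩ A) + (G ∩ B), then π(A) ∩ π(B) = π(span(C)). -/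
/-- Let `V` be an `𝔽_p`-vector space, `G ≤ V` a subspace with quotient map
`π : V → V/G`, and `A, B ≤ V` subspaces. Then
`π(A) ∩ π(B) = π(A ∩ B)` if and only if `G ∩ (A + B) = (G ∩ A) + (G ∩ B)`. -/
theorem stmt_17 (p : ℕ) [Fact p.Prime] {V : Type*} [AddCommGroup V] [Module (ZMod p) V]
    (G A B : Submodule (ZMod p) V) :
    Submodule.map G.mkQ A ⊓ Submodule.map G.mkQ B = Submodule.map G.mkQ (A ⊓ B) ↔
      G ⊓ (A ⊔ B) = (G ⊓ A) ⊔ (G ⊓ B) := by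
  constructor
  · intro h
    apply le_antisymm
    · rintro g ⟨hgG, hgAB⟩
      obtain ⟨a, ha, b, hb, rfl⟩ := Submodule.mem_sup.1 hgAB
      have hx : G.mkQ a ∈ Submodule.map G.mkQ (A ⊓ B) := by
        rw [← h]
        refine ⟨⟨a, ha, rfl⟩, ⟨-b, B.neg_mem hb, ?_⟩⟩
        have : G.mkQ (a + b) = 0 := by
          rw [← LinearMap.mem_ker, Submodule.ker_mkQ]; exact hgG
        rw [map_add] at this
        rw [map_neg]
        linear_combination (norm := abel) -this
      obtain ⟨c, hc, hcq⟩ := hx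
      have hg' : a - c ∈ G := by
        rw [← Submodule.ker_mkQ G, LinearMap.mem_ker, map_sub, hcq, sub_self]
      refine Submodule.mem_sup.2 ⟨a - c, ⟨hg', A.sub_mem ha hc.1⟩, c + b, ⟨?_, B.add_mem hc.2 hb⟩, by abel⟩
      have : c + b = (a + b) - (a - c) := by abel
      rw [this]; exact G.sub_mem hgG hg'
    · exact sup_le (inf_le_inf_left G le_sup_left) (inf_le_inf_left G le_sup_right)
  · intro h
    apply le_antisymm
    · rintro x ⟨⟨a, ha, rfl⟩, ⟨b, hb, hba⟩⟩
      have hab1 : a - b ∈ G := by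
        rw [← Submodule.ker_mkQ G, LinearMap.mem_ker, map_sub, hba, sub_self]
      have hab : a - b ∈ G ⊓ (A ⊔ B) :=
        ⟨hab1, Submodule.mem_sup.2 ⟨a, ha, -b, B.neg_mem hb, by abel⟩⟩
      rw [h] at hab
      obtain ⟨g₁, hg₁, g₂, hg₂, hsum⟩ := Submodule.mem_sup.1 hab
      refine ⟨a - g₁, ⟨A.sub_mem ha hg₁.2, ?_⟩, ?_⟩
      · have : a - g₁ = b + g₂ := by linear_combination (norm := abel) -hsum
        rw [this]; exact B.add_mem hb hg₂.2
      · have hz : G.mkQ g₁ = 0 := by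
          rw [← LinearMap.mem_ker, Submodule.ker_mkQ]; exact hg₁.1
        rw [map_sub, hz, sub_zero]
    · exact le_inf (Submodule.map_mono inf_le_left) (Submodule.map_mono inf_le_right)
end
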